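/- The modified bending strain measure K̃_mod = |U|⁻¹ (fᵀ·b·f − U·B), where |U| = sqrt(trace(fᵀ f)), is invariant under the mid-surface scaling f ↦ a·f, b ↦ a⁻¹·b for every a > 0. -/
import Mathlib


open Matrix

/-- The modified bending strain measure
`K̃_mod = (trace (fᵀ f))^{-1/2} • (fᵀ b f − U B)` is invariant under the
mid-surface scaling `f ↦ a • f`, `U ↦ a • U`, `b ↦ a⁻¹ • b` for every `a > 0`. -/
theorem Ktilde_mod_invariant {n : ℕ} (f r U b B : Matrix (Fin n) (Fin n) ℝ)
    (hf0 : f ≠ 0) (hf : IsUnit f.det) (hr : rᵀ * r = 1) (hU : U.PosDef)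
    (hpolar : f = r * U) (hb : bᵀ = b) :
    ∀ a : ℝ, 0 < a →
      (Real.sqrt (((a • f)ᵀ * (a • f)).trace))⁻¹ •
          ((a • f)ᵀ * (a⁻¹ • b) * (a • f) - (a • U) * B) =
        (Real.sqrt ((fᵀ * f).trace))⁻¹ • (fᵀ * b * f - U * B) := by
  intro a ha
  have ha' : a ≠ 0 := ne_of_gt ha
  have htr : ((a • f)ᵀ * (a • f)).trace = a ^ 2 * (fᵀ * f).trace := by
    simp [Matrix.transpose_smul, Matrix.smul_mul, Matrix.mul_smul, trace_smul,
      smul_smul, sq, smul_eq_mul]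
  have ht0 : 0 ≤ (fᵀ * f).trace := by
    rw [Matrix.trace]
    apply Finset.sum_nonneg
    intro i _
    simp only [Matrix.diag_apply, Matrix.mul_apply, Matrix.transpose_apply]
    exact Finset.sum_nonneg fun j _ => mul_self_nonneg _
  have hsqrt : Real.sqrt (((a • f)ᵀ * (a • f)).trace)
      = a * Real.sqrt ((fᵀ * f).trace) := by
    rw [htr, Real.sqrt_mul (sq_nonneg a), Real.sqrt_sq ha.le]
  have hM : (a • f)ᵀ * (a⁻¹ • b) * (a • f) - (a • U) * B
      = a • (fᵀ * b * f - U * B) := by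
    rw [smul_sub]
    congr 1
    · simp [Matrix.transpose_smul, Matrix.smul_mul, Matrix.mul_smul, smul_smul]
      rw [inv_mul_cancel₀ ha', mul_one]
    · simp [Matrix.smul_mul]
  rw [hsqrt, hM, mul_inv, smul_smul]
  congr 1
  rw [mul_comm a⁻¹, mul_assoc, inv_mul_cancel₀ ha', mul_one]
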